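/- Let g_a and g_b both satisfy Assumption 2 with g_a(k) ≤ g_b(k) for all k ≥ 1, and let p*_a, p*_b denote the unique fixed points in [u0, v0] of the operators T_a, T_b obtained by using g_a and g_b respectively in the definition of T (with the same c and δ). Then p*_a(s) ≤ p*_b(s) for all s ∈ [0,1]. -/

import Mathlib

/-!
If `pa > pb` somewhere, the ratio `pa / pb` attains a maximum `λ > 1` on `(0, 1]`, at some `s`:
near `0` it stays close to `1` because `pa x ≤ c x ≈ c'(0) x ≤ pb x`. As `ga ≤ gb` and
`pa ≤ λ pb`, each candidate `(k, t)` of `Tmap c gb δ pb s`, with value `V` and cost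
`C = c (s - t) + gb k`, satisfies `λ pb s = pa s ≤ λ V - (λ - 1) C`, so candidates with `V` near
`pb s` have `C` bounded away from `0`. But a candidate of small cost has `k = 1` and `t` close to
`s`, so its value is about `δ pb s > pb s`. Hence `Tmap c gb δ pb s > pb s`, contradicting the
fixed-point equation.
-/

open Set Filter

noncomputable def Tmap (c : ℝ → ℝ) (g : ℕ → ℝ) (δ : ℝ) (p : ℝ → ℝ) (s : ℝ) : ℝ :=
  sInf {y : ℝ | ∃ k : ℕ, ∃ t : ℝ, 1 ≤ k ∧ 0 ≤ t ∧ t ≤ s ∧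
    y = c (s - t) + g k + δ * k * p (t / k)}

section Tmap

variable {c p : ℝ → ℝ} {g : ℕ → ℝ} {δ s y : ℝ}

lemma nonneg_on_Icc_of_monotoneOn (hc : MonotoneOn c (Icc 0 1)) (hc0 : c 0 = 0) :
    ∀ x ∈ Icc (0 : ℝ) 1, 0 ≤ c x :=
  fun _ hx => hc0 ▸ hc ⟨le_rfl, zero_le_one⟩ hx hx.1

lemma div_natCast_mem_Icc {t : ℝ} {k : ℕ} (ht : t ∈ Icc (0 : ℝ) 1) (hk : 1 ≤ k) :
    t / k ∈ Icc (0 : ℝ) 1 :=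
  ⟨div_nonneg ht.1 k.cast_nonneg, (div_le_self ht.1 (by exact_mod_cast hk)).trans ht.2⟩

lemma le_Tmap (hs : 0 ≤ s)
    (h : ∀ k : ℕ, 1 ≤ k → ∀ t, 0 ≤ t → t ≤ s → y ≤ c (s - t) + g k + δ * k * p (t / k)) :
    y ≤ Tmap c g δ p s :=
  le_csInf ⟨_, 1, 0, le_rfl, le_rfl, hs, rfl⟩ fun _ ⟨k, t, hk, ht0, hts, hy⟩ =>
    hy ▸ h k hk t ht0 hts

lemma Tmap_le (hc : ∀ x ∈ Icc (0 : ℝ) 1, 0 ≤ c x) (hg : ∀ k : ℕ, 1 ≤ k → 0 ≤ g k) (hδ : 0 ≤ δ)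
    (hp : ∀ x ∈ Icc (0 : ℝ) 1, 0 ≤ p x) (hs : s ≤ 1) {k : ℕ} (hk : 1 ≤ k) {t : ℝ} (ht0 : 0 ≤ t)
    (hts : t ≤ s) :
    Tmap c g δ p s ≤ c (s - t) + g k + δ * k * p (t / k) := by
  refine csInf_le ⟨0, ?_⟩ ⟨k, t, hk, ht0, hts, rfl⟩
  rintro _ ⟨k, t, hk, ht0, hts, rfl⟩
  have hcst := hc (s - t) ⟨by linarith, by linarith⟩
  have hptk := hp _ (div_natCast_mem_Icc ⟨ht0, hts.trans hs⟩ hk)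
  have := hg k hk
  positivity

lemma exists_pos_add_le_of_cost_lt (hc_mono : StrictMonoOn c (Icc 0 1)) (hc0 : c 0 = 0)
    (hg_mono : StrictMonoOn g {k | 1 ≤ k}) (hg1 : 0 ≤ g 1) (hδ : 1 < δ) (hs : s ∈ Icc (0 : ℝ) 1)
    (hp : ContinuousWithinAt p (Icc 0 1) s) (hps : 0 < p s) :
    ∃ m > 0, ∀ k : ℕ, 1 ≤ k → ∀ t, 0 ≤ t → t ≤ s → c (s - t) + g k < m →
      p s + m ≤ c (s - t) + g k + δ * k * p (t / k) := by
  have hc_nonneg := nonneg_on_Icc_of_monotoneOn hc_mono.monotoneOn hc0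
  have hδps : 0 < (δ - 1) * p s := mul_pos (by linarith) hps
  set m₀ := (δ - 1) * p s / 2 with hm₀_def
  have hlt : (p s + m₀) / δ < p s := by
    rw [div_lt_iff₀ (by linarith)]
    linarith [hm₀_def]
  obtain ⟨η, hη, hball⟩ := Metric.mem_nhdsWithin_iff.1 (hp.eventually (lt_mem_nhds hlt))
  set η' := min η 1
  have hη' : η' ∈ Icc (0 : ℝ) 1 := ⟨(lt_min hη one_pos).le, min_le_right _ _⟩
  have hcη' : 0 < c η' := hc0 ▸ hc_mono ⟨le_rfl, zero_le_one⟩ hη' (lt_min hη one_pos)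
  have hg2 : 0 < g 2 := hg1.trans_lt (hg_mono (le_refl 1) (one_le_two (α := ℕ)) one_lt_two)
  set m := min (g 2) (min (c η') m₀)
  have hm_g : m ≤ g 2 := min_le_left _ _
  have hm_c : m ≤ c η' := (min_le_right _ _).trans (min_le_left _ _)
  have hm_m₀ : m ≤ m₀ := (min_le_right _ _).trans (min_le_right _ _)
  refine ⟨m, lt_min hg2 (lt_min hcη' (half_pos hδps)), fun k hk t ht0 hts hcost => ?_⟩
  have hcst := hc_nonneg (s - t) ⟨by linarith, by linarith [hs.2]⟩
  obtain rfl : k = 1 := by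
    by_contra hk1
    have : g 2 ≤ g k := hg_mono.monotoneOn (by norm_num) hk (by omega)
    linarith
  have hclose : s - t < η' := by
    by_contra! hfar
    have : c η' ≤ c (s - t) := hc_mono.monotoneOn hη' ⟨by linarith, by linarith [hs.2]⟩ hfar
    linarith
  have hpt : (p s + m₀) / δ < p t := hball
    ⟨by rw [Metric.mem_ball, Real.dist_eq, abs_of_nonpos (by linarith)]
        linarith [min_le_left η 1], ht0, hts.trans hs.2⟩
  rw [div_lt_iff₀ (by linarith)] at hpt
  simp only [Nat.cast_one, div_one, mul_one]
  linarith

lemma Tmap_add_mul_cost_le {pa pb : ℝ → ℝ} {ga gb : ℕ → ℝ} {lam : ℝ}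
    (hc : ∀ x ∈ Icc (0 : ℝ) 1, 0 ≤ c x) (hga : ∀ k : ℕ, 1 ≤ k → 0 ≤ ga k) (hδ : 0 ≤ δ)
    (hpa : ∀ x ∈ Icc (0 : ℝ) 1, 0 ≤ pa x) (hgab : ∀ k : ℕ, 1 ≤ k → ga k ≤ gb k)
    (hle : ∀ x ∈ Icc (0 : ℝ) 1, pa x ≤ lam * pb x) (hs : s ≤ 1) {k : ℕ} (hk : 1 ≤ k) {t : ℝ}
    (ht0 : 0 ≤ t) (hts : t ≤ s) :
    Tmap c ga δ pa s + (lam - 1) * (c (s - t) + gb k) ≤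
      lam * (c (s - t) + gb k + δ * k * pb (t / k)) :=
  calc Tmap c ga δ pa s + (lam - 1) * (c (s - t) + gb k)
      ≤ c (s - t) + ga k + δ * k * pa (t / k) + (lam - 1) * (c (s - t) + gb k) := by
        gcongr
        exact Tmap_le hc hga hδ hpa hs hk ht0 hts
    _ ≤ c (s - t) + gb k + δ * k * (lam * pb (t / k)) + (lam - 1) * (c (s - t) + gb k) := by
        gcongr
        exacts [hgab k hk, hle _ (div_natCast_mem_Icc ⟨ht0, hts.trans hs⟩ hk)]
    _ = lam * (c (s - t) + gb k + δ * k * pb (t / k)) := by ring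

lemma lt_Tmap_of_cost_gap {lam m : ℝ} (hlam : 1 < lam) (hm : 0 < m) (hs : 0 ≤ s)
    (hsmall : ∀ k : ℕ, 1 ≤ k → ∀ t, 0 ≤ t → t ≤ s → c (s - t) + g k < m →
      y + m ≤ c (s - t) + g k + δ * k * p (t / k))
    (hscaled : ∀ k : ℕ, 1 ≤ k → ∀ t, 0 ≤ t → t ≤ s →
      lam * y + (lam - 1) * (c (s - t) + g k) ≤ lam * (c (s - t) + g k + δ * k * p (t / k))) :
    y < Tmap c g δ p s := by
  set ε := (lam - 1) * m / lam
  have hε : 0 < ε := div_pos (mul_pos (by linarith) hm) (by linarith)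
  have hεm : ε ≤ m := div_le_of_le_mul₀ (by linarith) hm.le (by linarith)
  have hεlam : lam * (y + ε) = lam * y + (lam - 1) * m := by
    simp only [ε]
    field_simp
  refine (lt_add_of_pos_right y hε).trans_le (le_Tmap hs fun k hk t ht0 hts => ?_)
  by_cases hcost : c (s - t) + g k < m
  · linarith [hsmall k hk t ht0 hts hcost]
  · refine le_of_mul_le_mul_left ?_ (by linarith : 0 < lam)
    calc lam * (y + ε) = lam * y + (lam - 1) * m := hεlam
      _ ≤ lam * y + (lam - 1) * (c (s - t) + g k) := by gcongr; linarith
      _ ≤ _ := hscaled k hk t ht0 hts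

end Tmap

lemma exists_pos_le_mul_of_hasDerivWithinAt {c : ℝ → ℝ} {c' r : ℝ}
    (hc : HasDerivWithinAt c c' (Ioi 0) 0) (hc0 : c 0 = 0) (hr : c' < r) :
    ∃ a > 0, ∀ x ∈ Ico 0 a, c x ≤ r * x := by
  obtain ⟨a, ha, hsub⟩ :=
    mem_nhdsGT_iff_exists_Ioo_subset.1 (hc.limsup_slope_le' (lt_irrefl (0 : ℝ)) hr)
  refine ⟨a, ha, fun x ⟨hx0, hxa⟩ => ?_⟩
  rcases hx0.eq_or_lt with rfl | hx0
  · simp [hc0]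
  have hslope : slope c 0 x < r := hsub ⟨hx0, hxa⟩
  rw [slope_def_field, hc0, sub_zero, sub_zero, div_lt_iff₀ hx0] at hslope
  exact hslope.le

lemma exists_max_ratio {c pa pb : ℝ → ℝ} {c' s₀ : ℝ} (hc : HasDerivWithinAt c c' (Ioi 0) 0)
    (hc0 : c 0 = 0) (hc' : 0 < c') (hpa : ContinuousOn pa (Icc 0 1))
    (hpb : ContinuousOn pb (Icc 0 1)) (hpa_le : ∀ x ∈ Icc (0 : ℝ) 1, pa x ≤ c x)
    (hpb_ge : ∀ x ∈ Icc (0 : ℝ) 1, c' * x ≤ pb x) (hs₀ : s₀ ∈ Icc (0 : ℝ) 1)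
    (hlt : pb s₀ < pa s₀) :
    ∃ lam > 1, ∃ s ∈ Ioc (0 : ℝ) 1,
      pa s = lam * pb s ∧ ∀ x ∈ Icc (0 : ℝ) 1, pa x ≤ lam * pb x := by
  have hpb_pos : ∀ x ∈ Ioc (0 : ℝ) 1, 0 < pb x :=
    fun x hx => (mul_pos hc' hx.1).trans_le (hpb_ge x (Ioc_subset_Icc_self hx))
  have hs₀pos : 0 < s₀ := by
    refine hs₀.1.lt_of_ne fun h => ?_
    subst h
    linarith [hpa_le 0 hs₀, hpb_ge 0 hs₀]
  set μ := pa s₀ / pb s₀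
  have hpbs₀ := hpb_pos s₀ ⟨hs₀pos, hs₀.2⟩
  have hμ : 1 < μ := (one_lt_div hpbs₀).2 hlt
  obtain ⟨a, ha, hnear⟩ := exists_pos_le_mul_of_hasDerivWithinAt hc hc0 (lt_mul_left hc' hμ)
  set b := min a s₀
  have hb : 0 < b := lt_min ha hs₀pos
  have hsub : Icc b 1 ⊆ Ioc 0 1 := fun x hx => ⟨hb.trans_le hx.1, hx.2⟩
  obtain ⟨s, hs, hmax⟩ :=
    isCompact_Icc.exists_isMaxOn (nonempty_Icc.2 (hs₀.2.trans' (min_le_right _ _)))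
    ((hpa.mono (hsub.trans Ioc_subset_Icc_self)).div (hpb.mono (hsub.trans Ioc_subset_Icc_self))
      fun x hx => (hpb_pos x (hsub hx)).ne')
  have hpbs := hpb_pos s (hsub hs)
  have hμle : μ ≤ pa s / pb s := hmax ⟨min_le_right _ _, hs₀.2⟩
  refine ⟨pa s / pb s, hμ.trans_le hμle, s, hsub hs, (div_mul_cancel₀ _ hpbs.ne').symm,
    fun x hx => ?_⟩
  rcases lt_or_ge x b with hxb | hxb
  · calc pa x ≤ c x := hpa_le x hx
      _ ≤ μ * c' * x := hnear x ⟨hx.1, hxb.trans_le (min_le_left _ _)⟩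
      _ ≤ μ * pb x := by
        rw [mul_assoc]
        exact mul_le_mul_of_nonneg_left (hpb_ge x hx) (by linarith)
      _ ≤ pa s / pb s * pb x :=
        mul_le_mul_of_nonneg_right hμle ((mul_nonneg hc'.le hx.1).trans (hpb_ge x hx))
  · have hpbx := hpb_pos x (hsub ⟨hxb, hx.2⟩)
    exact (div_le_iff₀ hpbx).1 (hmax ⟨hxb, hx.2⟩)

theorem price_monotone_in_g_general (c : ℝ → ℝ) (ga gb : ℕ → ℝ) (δ : ℝ)
    (hc_mono : StrictMonoOn c (Set.Icc 0 1))
    (hc0 : c 0 = 0) (hc'0 : 0 < deriv c 0)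
    (hga_nonneg : ∀ k : ℕ, 1 ≤ k → 0 ≤ ga k)
    (hgb_mono : StrictMonoOn gb {k : ℕ | 1 ≤ k})
    (hgb_nonneg : ∀ k : ℕ, 1 ≤ k → 0 ≤ gb k)
    (hgab : ∀ k : ℕ, 1 ≤ k → ga k ≤ gb k)
    (hδ : 1 < δ)
    (pa pb : ℝ → ℝ)
    (hpa_cont : ContinuousOn pa (Set.Icc 0 1))
    (hpa_mem : ∀ s ∈ Set.Icc (0 : ℝ) 1, deriv c 0 * s ≤ pa s ∧ pa s ≤ c s)
    (hpa_fix : ∀ s ∈ Set.Icc (0 : ℝ) 1, Tmap c ga δ pa s = pa s)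
    (hpb_cont : ContinuousOn pb (Set.Icc 0 1))
    (hpb_mem : ∀ s ∈ Set.Icc (0 : ℝ) 1, deriv c 0 * s ≤ pb s ∧ pb s ≤ c s)
    (hpb_fix : ∀ s ∈ Set.Icc (0 : ℝ) 1, Tmap c gb δ pb s = pb s) :
    ∀ s ∈ Set.Icc (0 : ℝ) 1, pa s ≤ pb s := by
  intro s₀ hs₀
  by_contra! hlt
  have hc := (differentiableAt_of_deriv_ne_zero hc'0.ne').hasDerivAt.hasDerivWithinAt (s := Ioi 0)
  obtain ⟨lam, hlam, s, hs, heq, hle⟩ := exists_max_ratio hc hc0 hc'0 hpa_cont hpb_cont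
    (fun x hx => (hpa_mem x hx).2) (fun x hx => (hpb_mem x hx).1) hs₀ hlt
  have hs' : s ∈ Icc (0 : ℝ) 1 := Ioc_subset_Icc_self hs
  have hpbs : 0 < pb s := (mul_pos hc'0 hs.1).trans_le (hpb_mem s hs').1
  obtain ⟨m, hm, hgap⟩ := exists_pos_add_le_of_cost_lt hc_mono hc0 hgb_mono (hgb_nonneg 1 le_rfl)
    hδ hs' (hpb_cont s hs') hpbs
  have hscaled : ∀ k : ℕ, 1 ≤ k → ∀ t, 0 ≤ t → t ≤ s →
      lam * pb s + (lam - 1) * (c (s - t) + gb k) ≤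
        lam * (c (s - t) + gb k + δ * k * pb (t / k)) := fun k hk t ht0 hts => by
    rw [← heq, ← hpa_fix s hs']
    exact Tmap_add_mul_cost_le (nonneg_on_Icc_of_monotoneOn hc_mono.monotoneOn hc0) hga_nonneg
      (by linarith) (fun x hx => (mul_nonneg hc'0.le hx.1).trans (hpa_mem x hx).1) hgab hle
      hs.2 hk ht0 hts
  exact (hpb_fix s hs').not_gt (lt_Tmap_of_cost_gap hlam hm hs'.1 hgap hscaled)

theorem price_monotone_in_g (c : ℝ → ℝ) (ga gb : ℕ → ℝ) (δ : ℝ)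
    (hc_diff : DifferentiableOn ℝ c (Set.Icc 0 1))
    (hc_mono : StrictMonoOn c (Set.Icc 0 1))
    (hc_conv : StrictConvexOn ℝ (Set.Icc 0 1) c)
    (hc0 : c 0 = 0) (hc'0 : 0 < deriv c 0)
    (hga_mono : StrictMonoOn ga {k : ℕ | 1 ≤ k})
    (hga1 : ga 1 = 0) (hga_nonneg : ∀ k : ℕ, 1 ≤ k → 0 ≤ ga k)
    (hga_top : Tendsto ga atTop atTop)
    (hgb_mono : StrictMonoOn gb {k : ℕ | 1 ≤ k})
    (hgb1 : gb 1 = 0) (hgb_nonneg : ∀ k : ℕ, 1 ≤ k → 0 ≤ gb k)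
    (hgb_top : Tendsto gb atTop atTop)
    (hgab : ∀ k : ℕ, 1 ≤ k → ga k ≤ gb k)
    (hδ : 1 < δ)
    (pa pb : ℝ → ℝ)
    (hpa_cont : ContinuousOn pa (Set.Icc 0 1))
    (hpa_mem : ∀ s ∈ Set.Icc (0 : ℝ) 1, deriv c 0 * s ≤ pa s ∧ pa s ≤ c s)
    (hpa_fix : ∀ s ∈ Set.Icc (0 : ℝ) 1, Tmap c ga δ pa s = pa s)
    (hpb_cont : ContinuousOn pb (Set.Icc 0 1))
    (hpb_mem : ∀ s ∈ Set.Icc (0 : ℝ) 1, deriv c 0 * s ≤ pb s ∧ pb s ≤ c s)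
    (hpb_fix : ∀ s ∈ Set.Icc (0 : ℝ) 1, Tmap c gb δ pb s = pb s) :
    ∀ s ∈ Set.Icc (0 : ℝ) 1, pa s ≤ pb s :=
  price_monotone_in_g_general c ga gb δ hc_mono hc0 hc'0 hga_nonneg hgb_mono hgb_nonneg hgab hδ pa
    pb hpa_cont hpa_mem hpa_fix hpb_cont hpb_mem hpb_fix
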